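/- If x : Σ → ℝ^{D−2} is smooth, and for each m the operator L acting on y^m is defined by L y^m = {{y^m, x^n}, x_n} (sum over n), then in local coordinates L y^m = (1/√w) ∂_a [ (1/√w) γ(x) γ(x)^{ab} ∂_b y^m ], where γ(x)_{ab} = ∂_a x^m ∂_b x_m, γ(x) = det γ(x)_{ab}, and γ(x)^{ab} is the inverse metric; in particular L is elliptic with symbol (1/w) γ(x) γ(x)^{ab} ξ_a ξ_b whenever γ(x)_{ab} is positive definite. -/

import Mathlib

/-- Partial derivative in the `a`-th coordinate direction on `ℝ²`. -/
noncomputable def pd (a : Fin 2) (f : (Fin 2 → ℝ) → ℝ) (q : Fin 2 → ℝ) : ℝ :=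
  fderiv ℝ f q (Pi.single a 1)

/-- The Poisson bracket `{f,g} = (∈^{ab}/√w) ∂_a f ∂_b g = (1/√w)(∂₁f ∂₂g − ∂₂f ∂₁g)`. -/
noncomputable def pb (w f g : (Fin 2 → ℝ) → ℝ) (q : Fin 2 → ℝ) : ℝ :=
  (pd 0 f q * pd 1 g q - pd 1 f q * pd 0 g q) / Real.sqrt (w q)

/-- The induced metric `γ(x)_{ab} = ∂_a x^m ∂_b x_m`. -/
noncomputable def gmat (dm : ℕ) (x : Fin dm → (Fin 2 → ℝ) → ℝ) (q : Fin 2 → ℝ) :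
    Matrix (Fin 2) (Fin 2) ℝ :=
  Matrix.of fun a b => ∑ m, pd a (x m) q * pd b (x m) q

section Aux

lemma contDiff_pd (a : Fin 2) {f : (Fin 2 → ℝ) → ℝ} (hf : ContDiff ℝ (⊤ : ℕ∞) f) :
    ContDiff ℝ (⊤ : ℕ∞) (pd a f) :=
  (hf.fderiv_right (by simp)).clm_apply contDiff_const

lemma pd_mul (a : Fin 2) {f g : (Fin 2 → ℝ) → ℝ} {q : Fin 2 → ℝ}
    (hf : DifferentiableAt ℝ f q) (hg : DifferentiableAt ℝ g q) :
    pd a (fun p => f p * g p) q = pd a f q * g q + f q * pd a g q := by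
  unfold pd
  rw [fderiv_fun_mul hf hg]
  simp [mul_comm]
  ring

lemma pd_sum {ι : Type*} (s : Finset ι) (F : ι → (Fin 2 → ℝ) → ℝ) (a : Fin 2) (q : Fin 2 → ℝ)
    (hF : ∀ i ∈ s, DifferentiableAt ℝ (F i) q) :
    pd a (fun p => ∑ i ∈ s, F i p) q = ∑ i ∈ s, pd a (F i) q := by
  unfold pd
  rw [fderiv_fun_sum hF]
  simp

lemma pd_neg (a : Fin 2) (f : (Fin 2 → ℝ) → ℝ) (q : Fin 2 → ℝ) :
    pd a (fun p => -f p) q = -pd a f q := by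
  unfold pd
  rw [fderiv_fun_neg]
  simp

lemma pd_comm (a b : Fin 2) {f : (Fin 2 → ℝ) → ℝ} (hf : ContDiff ℝ (⊤ : ℕ∞) f) (q : Fin 2 → ℝ) :
    pd a (pd b f) q = pd b (pd a f) q := by
  have hd : Differentiable ℝ (fderiv ℝ f) := (hf.fderiv_right (m := (⊤ : ℕ∞)) (by simp)).differentiable (by simp)
  have key : ∀ c v : Fin 2,
      pd v (pd c f) q = fderiv ℝ (fderiv ℝ f) q (Pi.single v 1) (Pi.single c 1) := by
    intro c v
    have h1 : pd c f = fun p => (fderiv ℝ f p) (Pi.single c 1) := rfl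
    show fderiv ℝ (pd c f) q (Pi.single v 1) = _
    rw [h1, fderiv_clm_apply (hd q) (differentiableAt_const _)]
    simp
  have hsymm : IsSymmSndFDerivAt ℝ f q := hf.contDiffAt.isSymmSndFDerivAt (by simp only [minSmoothness_of_isRCLikeNormedField]; exact WithTop.coe_le_coe.mpr le_top)
  rw [key b a, key a b, hsymm]

end Aux

/-- If `x : Σ → ℝ^{D−2}` is smooth, the operator `L y^m = {{y^m, x^n}, x_n}` equals the
divergence-form operator `(1/√w) ∂_a [ (1/√w) γ(x) γ(x)^{ab} ∂_b y^m ]`; in particular it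
is elliptic, with symbol `(1/w) γ(x) γ(x)^{ab} ξ_a ξ_b` positive for `ξ ≠ 0`, whenever the
induced metric `γ(x)_{ab}` is positive definite. -/
theorem double_bracket_operator_elliptic_divergence_form
    (dm : ℕ) (w : (Fin 2 → ℝ) → ℝ) (x y : Fin dm → (Fin 2 → ℝ) → ℝ)
    (hw : ContDiff ℝ (⊤ : ℕ∞) w) (hwpos : ∀ q, 0 < w q)
    (hx : ∀ m, ContDiff ℝ (⊤ : ℕ∞) (x m)) (hy : ∀ m, ContDiff ℝ (⊤ : ℕ∞) (y m))
    (hpos : ∀ q, (gmat dm x q).PosDef) :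
    ∀ (m : Fin dm) (q : Fin 2 → ℝ),
      (∑ n, pb w (pb w (y m) (x n)) (x n) q
        = (1 / Real.sqrt (w q)) * ∑ a : Fin 2,
            pd a (fun p => (1 / Real.sqrt (w p)) *
              ∑ b : Fin 2, (gmat dm x p).det * (gmat dm x p)⁻¹ a b * pd b (y m) p) q)
      ∧ (∀ ξ : Fin 2 → ℝ, ξ ≠ 0 →
          0 < (1 / w q) * ∑ a : Fin 2, ∑ b : Fin 2,
            (gmat dm x q).det * (gmat dm x q)⁻¹ a b * ξ a * ξ b) := by
  intro m q
  have hsw : ∀ p, Real.sqrt (w p) ≠ 0 := fun p =>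
    (Real.sqrt_pos.mpr (hwpos p)).ne'
  have hsqw : ContDiff ℝ (⊤ : ℕ∞) fun p => Real.sqrt (w p) := hw.sqrt fun p => (hwpos p).ne'
  -- the first-bracket functions B n = {y m, x n}
  set u := y m with hu
  have hB : ∀ n, ContDiff ℝ (⊤ : ℕ∞) (pb w u (x n)) := by
    intro n
    have : pb w u (x n) = fun p =>
        (pd 0 u p * pd 1 (x n) p - pd 1 u p * pd 0 (x n) p) / Real.sqrt (w p) := rfl
    rw [this]
    exact (((contDiff_pd 0 (hy m)).mul (contDiff_pd 1 (hx n))).sub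
      ((contDiff_pd 1 (hy m)).mul (contDiff_pd 0 (hx n)))).div hsqw hsw
  -- adjugate rewriting
  have hadj : ∀ (p : Fin 2 → ℝ) (a b : Fin 2),
      (gmat dm x p).det * (gmat dm x p)⁻¹ a b = (gmat dm x p).adjugate a b := by
    intro p a b
    have hdet : (gmat dm x p).det ≠ 0 := (hpos p).det_pos.ne'
    rw [Matrix.inv_def, Ring.inverse_eq_inv]
    simp only [Matrix.smul_apply, smul_eq_mul]
    field_simp
  constructor
  · -- the divergence-form identity
    have hsum1 : ∀ p : Fin 2 → ℝ,
        ∑ n, (pd 0 u p * pd 1 (x n) p - pd 1 u p * pd 0 (x n) p) * pd 1 (x n) p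
        = (∑ n, pd 1 (x n) p * pd 1 (x n) p) * pd 0 u p
          - (∑ n, pd 0 (x n) p * pd 1 (x n) p) * pd 1 u p := by
      intro p
      rw [Finset.sum_mul, Finset.sum_mul, ← Finset.sum_sub_distrib]
      exact Finset.sum_congr rfl fun n _ => by ring
    have hsum0 : ∀ p : Fin 2 → ℝ,
        ∑ n, (pd 0 u p * pd 1 (x n) p - pd 1 u p * pd 0 (x n) p) * pd 0 (x n) p
        = (∑ n, pd 0 (x n) p * pd 1 (x n) p) * pd 0 u p
          - (∑ n, pd 0 (x n) p * pd 0 (x n) p) * pd 1 u p := by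
      intro p
      rw [Finset.sum_mul, Finset.sum_mul, ← Finset.sum_sub_distrib]
      exact Finset.sum_congr rfl fun n _ => by ring
    have hG0 : (fun p => (1 / Real.sqrt (w p)) *
        ∑ b : Fin 2, (gmat dm x p).det * (gmat dm x p)⁻¹ 0 b * pd b u p)
        = fun p => ∑ n, pb w u (x n) p * pd 1 (x n) p := by
      funext p
      have e0 : (gmat dm x p).det * (gmat dm x p)⁻¹ 0 0
          = ∑ n, pd 1 (x n) p * pd 1 (x n) p := by
        rw [hadj, Matrix.adjugate_fin_two]
        simp [gmat]
      have e1 : (gmat dm x p).det * (gmat dm x p)⁻¹ 0 1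
          = -∑ n, pd 0 (x n) p * pd 1 (x n) p := by
        rw [hadj, Matrix.adjugate_fin_two]
        simp [gmat]
      rw [Fin.sum_univ_two, e0, e1]
      simp only [pb]
      rw [Finset.sum_congr rfl fun n _ => div_mul_eq_mul_div _ _ _, ← Finset.sum_div,
        hsum1 p]
      ring
    have hG1 : (fun p => (1 / Real.sqrt (w p)) *
        ∑ b : Fin 2, (gmat dm x p).det * (gmat dm x p)⁻¹ 1 b * pd b u p)
        = fun p => -∑ n, pb w u (x n) p * pd 0 (x n) p := by
      funext p
      have e0 : (gmat dm x p).det * (gmat dm x p)⁻¹ 1 0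
          = -∑ n, pd 0 (x n) p * pd 1 (x n) p := by
        rw [hadj, Matrix.adjugate_fin_two]
        simp [gmat]
        rw [Finset.sum_congr rfl fun n _ => mul_comm (pd 1 (x n) p) (pd 0 (x n) p)]
      have e1 : (gmat dm x p).det * (gmat dm x p)⁻¹ 1 1
          = ∑ n, pd 0 (x n) p * pd 0 (x n) p := by
        rw [hadj, Matrix.adjugate_fin_two]
        simp [gmat]
      rw [Fin.sum_univ_two, e0, e1]
      simp only [pb]
      rw [Finset.sum_congr rfl fun n _ => div_mul_eq_mul_div _ _ _, ← Finset.sum_div,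
        hsum0 p]
      ring
    rw [Fin.sum_univ_two, hG0, hG1]
    -- differentiate
    have hdB : ∀ n, ∀ p, DifferentiableAt ℝ (pb w u (x n)) p := fun n p =>
      ((hB n).differentiable (by simp)) p
    have hdx : ∀ n (c : Fin 2) (p : Fin 2 → ℝ), DifferentiableAt ℝ (pd c (x n)) p :=
      fun n c p => ((contDiff_pd c (hx n)).differentiable (by simp)) p
    rw [pd_sum Finset.univ (fun n p => pb w u (x n) p * pd 1 (x n) p) 0 q (fun n _ => ((hdB n q).mul (hdx n 1 q)))]
    rw [pd_neg, pd_sum Finset.univ (fun n p => pb w u (x n) p * pd 0 (x n) p) 1 q (fun n _ => ((hdB n q).mul (hdx n 0 q)))]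
    rw [Finset.sum_congr rfl (fun n _ => pd_mul 0 (hdB n q) (hdx n 1 q)),
        Finset.sum_congr rfl (fun n _ => pd_mul 1 (hdB n q) (hdx n 0 q))]
    have hLHS : ∀ n, pb w (pb w u (x n)) (x n) q =
        (pd 0 (pb w u (x n)) q * pd 1 (x n) q - pd 1 (pb w u (x n)) q * pd 0 (x n) q)
          / Real.sqrt (w q) := fun n => rfl
    have hcomm : ∀ n, pd 0 (pd 1 (x n)) q = pd 1 (pd 0 (x n)) q := fun n =>
      pd_comm 0 1 (hx n) q
    have hfin : ∀ n : Fin dm,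
        (pd 0 (pb w u (x n)) q * pd 1 (x n) q + pb w u (x n) q * pd 0 (pd 1 (x n)) q)
          - (pd 1 (pb w u (x n)) q * pd 0 (x n) q + pb w u (x n) q * pd 1 (pd 0 (x n)) q)
        = pd 0 (pb w u (x n)) q * pd 1 (x n) q - pd 1 (pb w u (x n)) q * pd 0 (x n) q :=
      fun n => by rw [hcomm n]; ring
    rw [Finset.sum_congr rfl fun n _ => hLHS n, ← Finset.sum_div, ← sub_eq_add_neg,
      ← Finset.sum_sub_distrib, Finset.sum_congr rfl fun n _ => hfin n]
    ring
  · intro ξ hξ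
    have hMi : ((gmat dm x q)⁻¹).PosDef := (hpos q).inv
    have hdet : 0 < (gmat dm x q).det := (hpos q).det_pos
    have hquad : 0 < dotProduct ξ (Matrix.mulVec (gmat dm x q)⁻¹ ξ) := by
      have := hMi.dotProduct_mulVec_pos hξ
      simpa using this
    have hrw : ∑ a : Fin 2, ∑ b : Fin 2,
        (gmat dm x q).det * (gmat dm x q)⁻¹ a b * ξ a * ξ b
        = (gmat dm x q).det * dotProduct ξ (Matrix.mulVec (gmat dm x q)⁻¹ ξ) := by
      simp only [dotProduct, Matrix.mulVec, Finset.mul_sum]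
      apply Finset.sum_congr rfl
      intro a _
      apply Finset.sum_congr rfl
      intro b _
      ring
    rw [hrw]
    have h1 : 0 < 1 / w q := one_div_pos.mpr (hwpos q)
    exact mul_pos h1 (mul_pos hdet hquad)
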